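/- arXiv:math/0201177 — 5 statements merged into one kernel-verified Lean document; each statement's English description precedes it below -/
import Mathlib

section
/- Fix a positive integer k. For natural numbers a, b, c with 0 ≤ a, b, c ≤ k, define the quantum admissibility condition: a ≤ b + c, b ≤ c + a, c ≤ a + b, a + b + c even, and a + b + c ≤ 2k. Then there exist matrices A ∈ C_a, B ∈ C_b, C ∈ C_c in SU(2) with ABC = 1, where C_j denotes the conjugacy class of SU(2) with trace 2 cos(πj/k), if and only if the real numbers πa/k, πb/k, πc/k satisfy: each is at most the sum of the other two, and their total is at most 2π. -/
/-!
Identify `SU(2)` with the unit quaternions. An element of trace `2 cos x` with `x ∈ [0, π]` is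
`cos x + sin x • u` for a unit imaginary quaternion `u`, so for a second one `cos y + sin y • v`
the half-trace of the product is `cos x cos y - sin x sin y ⟪u, v⟫`. By Cauchy–Schwarz it lies in
`[cos (x + y), cos (x - y)]`, and varying the angle between `u` and `v` attains every value there.
Since `C = (AB)⁻¹` has the same trace as `AB`, a solution exists iff
`cos z ∈ [cos (x + y), cos (x - y)]`, and monotonicity of `cos` on `[0, π]` turns this into the
triangle inequalities together with `x + y + z ≤ 2π`.
-/

open Real

abbrev SU2 := Matrix.specialUnitaryGroup (Fin 2) ℂ

noncomputable instance : Group SU2 :=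
  { (inferInstance : Monoid SU2) with
    inv := fun A => ⟨star A.1, by
      have h := Matrix.mem_specialUnitaryGroup_iff.1 A.2
      refine Matrix.mem_specialUnitaryGroup_iff.2 ⟨Unitary.star_mem h.1, ?_⟩
      simp [Matrix.star_eq_conjTranspose, Matrix.det_conjTranspose, h.2]⟩
    inv_mul_cancel := fun A => Subtype.ext ((Matrix.mem_specialUnitaryGroup_iff.1 A.2).1.1) }

open Set Matrix ComplexConjugate

namespace Real

lemma cos_le_cos_iff_le_and_add_le_two_pi {σ γ : ℝ} (hσ : σ ∈ Icc 0 (2 * π))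
    (hγ : γ ∈ Icc 0 π) : cos σ ≤ cos γ ↔ γ ≤ σ ∧ σ + γ ≤ 2 * π := by
  rcases le_or_gt σ π with hσπ | hπσ
  · rw [strictAntiOn_cos.le_iff_ge ⟨hσ.1, hσπ⟩ hγ]
    exact ⟨fun h ↦ ⟨h, by linarith [hγ.2]⟩, And.left⟩
  · rw [← cos_two_pi_sub σ, strictAntiOn_cos.le_iff_ge ⟨by linarith [hσ.2], by linarith⟩ hγ]
    exact ⟨fun h ↦ ⟨by linarith [hγ.2], by linarith⟩, fun h ↦ by linarith [h.2]⟩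

lemma cos_mem_Icc_cos_add_cos_sub_iff {α β γ : ℝ} (hα : α ∈ Icc 0 π) (hβ : β ∈ Icc 0 π)
    (hγ : γ ∈ Icc 0 π) :
    cos γ ∈ Icc (cos (α + β)) (cos (α - β)) ↔
      α ≤ β + γ ∧ β ≤ γ + α ∧ γ ≤ α + β ∧ α + β + γ ≤ 2 * π := by
  have hsum : α + β ∈ Icc 0 (2 * π) := ⟨by linarith [hα.1, hβ.1], by linarith [hα.2, hβ.2]⟩
  have hdiff : |α - β| ∈ Icc 0 π :=
    ⟨abs_nonneg _, abs_sub_le_iff.2 ⟨by linarith [hα.2, hβ.1], by linarith [hα.1, hβ.2]⟩⟩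
  rw [mem_Icc, cos_le_cos_iff_le_and_add_le_two_pi hsum hγ, ← cos_abs (α - β),
    strictAntiOn_cos.le_iff_ge hγ hdiff, abs_sub_le_iff]
  constructor
  · rintro ⟨⟨h₁, h₂⟩, h₃, h₄⟩; exact ⟨by linarith, by linarith, h₁, h₂⟩
  · rintro ⟨h₁, h₂, h₃, h₄⟩; exact ⟨⟨h₃, h₄⟩, by linarith, by linarith⟩

end Real

lemma Matrix.star_eq_adjugate_of_mem_specialUnitaryGroup {n α : Type*} [Fintype n]
    [DecidableEq n] [CommRing α] [StarRing α] {A : Matrix n n α}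
    (hA : A ∈ specialUnitaryGroup n α) : star A = adjugate A := by
  obtain ⟨hU, hdet⟩ := mem_specialUnitaryGroup_iff.1 hA
  have hinv : A⁻¹ = star A := inv_eq_right_inv (mem_unitaryGroup_iff.1 hU)
  rw [← hinv, inv_def, hdet, Ring.inverse_one, one_smul]

namespace SU2

variable (X : SU2)

lemma apply_one_one : X.1 1 1 = conj (X.1 0 0) := by
  have h := congrFun (congrFun (star_eq_adjugate_of_mem_specialUnitaryGroup X.2) 0) 0
  rw [adjugate_fin_two] at h
  simpa using h.symm

lemma apply_one_zero : X.1 1 0 = -conj (X.1 0 1) := by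
  have h := congrFun (congrFun (star_eq_adjugate_of_mem_specialUnitaryGroup X.2) 0) 1
  rw [adjugate_fin_two] at h
  simpa using congrArg conj h

lemma normSq_add_normSq : Complex.normSq (X.1 0 0) + Complex.normSq (X.1 0 1) = 1 := by
  have h := (mem_specialUnitaryGroup_iff.1 X.2).2
  rw [det_fin_two, apply_one_one, apply_one_zero, mul_neg, sub_neg_eq_add, Complex.mul_conj,
    Complex.mul_conj] at h
  exact_mod_cast h

lemma trace_eq : trace X.1 = (2 * (X.1 0 0).re : ℝ) := by
  rw [trace_fin_two, apply_one_one, Complex.add_conj]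

lemma trace_eq_ofReal_re : trace X.1 = ((trace X.1).re : ℂ) := by
  rw [trace_eq, Complex.ofReal_re]

lemma re_apply_zero_zero_of_trace_eq {c : ℝ} (h : trace X.1 = (2 * c : ℝ)) :
    (X.1 0 0).re = c := by
  rw [trace_eq] at h
  linarith [Complex.ofReal_injective h]

lemma trace_inv : trace (X⁻¹).1 = trace X.1 := by
  change trace (star X.1) = _
  rw [star_eq_conjTranspose, trace_conjTranspose, trace_eq]
  exact Complex.conj_ofReal _

def imPart : Fin 3 → ℝ := ![(X.1 0 0).im, (X.1 0 1).re, (X.1 0 1).im]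

lemma sum_imPart_sq : ∑ i, imPart X i ^ 2 = 1 - (X.1 0 0).re ^ 2 := by
  have h := normSq_add_normSq X
  simp only [Complex.normSq_apply] at h
  simp only [imPart, Fin.sum_univ_three, Matrix.cons_val]
  linear_combination h

variable (Y : SU2)

lemma re_trace_mul : (trace (X.1 * Y.1)).re / 2 =
    (X.1 0 0).re * (Y.1 0 0).re - ∑ i, imPart X i * imPart Y i := by
  rw [trace_fin_two, mul_apply, mul_apply, Fin.sum_univ_two, Fin.sum_univ_two, apply_one_one,
    apply_one_zero, apply_one_one, apply_one_zero]
  simp only [imPart, Fin.sum_univ_three, Matrix.cons_val, Complex.add_re, Complex.mul_re,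
    Complex.neg_re, Complex.neg_im, Complex.conj_re, Complex.conj_im]
  ring

lemma re_trace_mul_div_two_mem_Icc {x y : ℝ} (hx : x ∈ Icc 0 π) (hy : y ∈ Icc 0 π)
    (hX : trace X.1 = (2 * cos x : ℝ)) (hY : trace Y.1 = (2 * cos y : ℝ)) :
    (trace (X.1 * Y.1)).re / 2 ∈ Icc (cos (x + y)) (cos (x - y)) := by
  have hXre := re_apply_zero_zero_of_trace_eq X hX
  have hYre := re_apply_zero_zero_of_trace_eq Y hY
  have hCS : |∑ i, imPart X i * imPart Y i| ≤ sin x * sin y := by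
    refine abs_le_of_sq_le_sq ?_ (mul_nonneg (sin_nonneg_of_mem_Icc hx) (sin_nonneg_of_mem_Icc hy))
    calc (∑ i, imPart X i * imPart Y i) ^ 2 ≤ (∑ i, imPart X i ^ 2) * ∑ i, imPart Y i ^ 2 :=
          Finset.sum_mul_sq_le_sq_mul_sq _ _ _
      _ = (sin x * sin y) ^ 2 := by
          rw [sum_imPart_sq, sum_imPart_sq, hXre, hYre, ← sin_sq, ← sin_sq]; ring
  rw [re_trace_mul, hXre, hYre, cos_add, cos_sub]
  constructor <;> linarith [abs_le.1 hCS]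

lemma mem_specialUnitaryGroup_of_normSq_add_normSq {z w : ℂ}
    (h : Complex.normSq z + Complex.normSq w = 1) :
    !![z, w; -conj w, conj z] ∈ specialUnitaryGroup (Fin 2) ℂ := by
  have h' : z * conj z + w * conj w = 1 := by
    rw [Complex.mul_conj, Complex.mul_conj]
    exact_mod_cast h
  have hdet : det !![z, w; -conj w, conj z] = 1 := by
    rw [det_fin_two_of]
    linear_combination h'
  have hstar : star !![z, w; -conj w, conj z] = adjugate !![z, w; -conj w, conj z] := by
    rw [adjugate_fin_two_of]
    ext i j
    fin_cases i <;> fin_cases j <;> simp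
  refine mem_specialUnitaryGroup_iff.2 ⟨mem_unitaryGroup_iff'.2 ?_, hdet⟩
  rw [hstar, adjugate_mul, hdet, one_smul]

def ofEntries (z w : ℂ) (h : Complex.normSq z + Complex.normSq w = 1) : SU2 :=
  ⟨!![z, w; -conj w, conj z], mem_specialUnitaryGroup_of_normSq_add_normSq h⟩

section ofEntries

variable {z w : ℂ} (h : Complex.normSq z + Complex.normSq w = 1)

@[simp] lemma ofEntries_apply_zero_zero : (ofEntries z w h).1 0 0 = z := rfl

@[simp] lemma ofEntries_apply_zero_one : (ofEntries z w h).1 0 1 = w := rfl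

end ofEntries

lemma exists_trace_eq_of_mem_Icc {x y t : ℝ} (ht : t ∈ Icc (cos (x + y)) (cos (x - y))) :
    ∃ X Y : SU2, trace X.1 = (2 * cos x : ℝ) ∧ trace Y.1 = (2 * cos y : ℝ) ∧
      (trace (X.1 * Y.1)).re / 2 = t := by
  -- the half-trace of `X * Y` when the axis of `Y` makes the angle `θ` with that of `X`
  set f : ℝ → ℝ := fun θ ↦ cos x * cos y - cos θ * sin x * sin y
  have hf : Icc (f 0) (f π) ⊆ f '' Icc 0 π :=
    intermediate_value_Icc pi_pos.le (by fun_prop)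
  obtain ⟨θ, -, hθ⟩ : t ∈ f '' Icc 0 π := hf (by simpa [f, cos_add, cos_sub] using ht)
  have hX : Complex.normSq (cos x + sin x * Complex.I) + Complex.normSq 0 = 1 := by
    rw [Complex.normSq_add_mul_I, map_zero]
    linear_combination cos_sq_add_sin_sq x
  have hY : Complex.normSq (cos y + (cos θ * sin y : ℝ) * Complex.I) +
      Complex.normSq ((sin θ * sin y : ℝ) * Complex.I) = 1 := by
    rw [Complex.normSq_add_mul_I, map_mul, Complex.normSq_I, Complex.normSq_ofReal]
    linear_combination (sin y ^ 2) * cos_sq_add_sin_sq θ + cos_sq_add_sin_sq y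
  refine ⟨ofEntries _ _ hX, ofEntries _ _ hY, ?_, ?_, ?_⟩
  · rw [trace_eq, ofEntries_apply_zero_zero]
    simp
  · rw [trace_eq, ofEntries_apply_zero_zero]
    simp
  · rw [re_trace_mul, ← hθ]
    simp only [imPart, f, ofEntries_apply_zero_zero, ofEntries_apply_zero_one, Fin.sum_univ_three,
      cons_val_zero, cons_val_one, cons_val, Complex.add_re, Complex.add_im, Complex.mul_re,
      Complex.mul_im, Complex.ofReal_re, Complex.ofReal_im, Complex.I_re, Complex.I_im,
      Complex.zero_re, Complex.zero_im]
    ring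

theorem exists_mul_mul_eq_one_iff {x y z : ℝ} (hx : x ∈ Icc 0 π) (hy : y ∈ Icc 0 π)
    (hz : z ∈ Icc 0 π) :
    (∃ A B C : SU2, trace A.1 = (2 * cos x : ℝ) ∧ trace B.1 = (2 * cos y : ℝ) ∧
        trace C.1 = (2 * cos z : ℝ) ∧ A * B * C = 1) ↔
      x ≤ y + z ∧ y ≤ z + x ∧ z ≤ x + y ∧ x + y + z ≤ 2 * π := by
  rw [← cos_mem_Icc_cos_add_cos_sub_iff hx hy hz]
  constructor
  · rintro ⟨A, B, C, hA, hB, hC, hABC⟩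
    have hAB : trace (A * B).1 = trace C.1 := by rw [eq_inv_of_mul_eq_one_left hABC, trace_inv]
    have := re_trace_mul_div_two_mem_Icc A B hx hy hA hB
    rwa [show A.1 * B.1 = (A * B).1 from rfl, hAB, hC, Complex.ofReal_re,
      mul_div_cancel_left₀ _ two_ne_zero] at this
  · intro h
    obtain ⟨A, B, hA, hB, hAB⟩ := exists_trace_eq_of_mem_Icc h
    refine ⟨A, B, (A * B)⁻¹, hA, hB, ?_, mul_inv_cancel _⟩
    rw [trace_inv, trace_eq_ofReal_re]
    change ((trace (A.1 * B.1)).re : ℂ) = _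
    rw [← hAB]
    push_cast
    ring

end SU2

theorem su2_triple_product_iff_general (k : ℕ) (a b c : ℕ)
    (ha : a ≤ k) (hb : b ≤ k) (hc : c ≤ k) :
    (∃ A B C : SU2,
        Matrix.trace (A : Matrix (Fin 2) (Fin 2) ℂ) = ((2 * Real.cos (π * a / k) : ℝ) : ℂ) ∧
        Matrix.trace (B : Matrix (Fin 2) (Fin 2) ℂ) = ((2 * Real.cos (π * b / k) : ℝ) : ℂ) ∧
        Matrix.trace (C : Matrix (Fin 2) (Fin 2) ℂ) = ((2 * Real.cos (π * c / k) : ℝ) : ℂ) ∧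
        A * B * C = 1) ↔
      (π * a / k ≤ π * b / k + π * c / k ∧
       π * b / k ≤ π * c / k + π * a / k ∧
       π * c / k ≤ π * a / k + π * b / k ∧
       π * a / k + π * b / k + π * c / k ≤ 2 * π) := by
  have hmem : ∀ j : ℕ, j ≤ k → π * j / k ∈ Icc 0 π := fun j hj ↦
    ⟨by positivity, div_le_of_le_mul₀ k.cast_nonneg pi_pos.le (by gcongr)⟩
  exact SU2.exists_mul_mul_eq_one_iff (hmem a ha) (hmem b hb) (hmem c hc)

/-- for `0 ≤ a, b, c ≤ k`, there exist `A ∈ C_a`, `B ∈ C_b`, `C ∈ C_c` in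
`SU(2)` (conjugacy classes with traces `2cos(πj/k)`) with `ABC = 1` if and only if the
angles `πa/k, πb/k, πc/k` satisfy the spherical triangle inequalities and sum to at most
`2π`. -/
theorem su2_triple_product_iff (k : ℕ) (hk : 0 < k) (a b c : ℕ)
    (ha : a ≤ k) (hb : b ≤ k) (hc : c ≤ k) :
    (∃ A B C : SU2,
        Matrix.trace (A : Matrix (Fin 2) (Fin 2) ℂ) = ((2 * Real.cos (π * a / k) : ℝ) : ℂ) ∧
        Matrix.trace (B : Matrix (Fin 2) (Fin 2) ℂ) = ((2 * Real.cos (π * b / k) : ℝ) : ℂ) ∧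
        Matrix.trace (C : Matrix (Fin 2) (Fin 2) ℂ) = ((2 * Real.cos (π * c / k) : ℝ) : ℂ) ∧
        A * B * C = 1) ↔
      (π * a / k ≤ π * b / k + π * c / k ∧
       π * b / k ≤ π * c / k + π * a / k ∧
       π * c / k ≤ π * a / k + π * b / k ∧
       π * a / k + π * b / k + π * c / k ≤ 2 * π) :=
  su2_triple_product_iff_general k a b c ha hb hc
end

section
/- For unit vectors realization: a spherical triangle with side lengths ℓ₁, ℓ₂, ℓ₃ ∈ [0, π] exists (i.e., there are points p, q, r on the unit sphere S² with d(q,r) = ℓ₁, d(r,p) = ℓ₂, d(p,q) = ℓ₃, where d is the spherical/geodesic distance) if and only if each ℓᵢ is at most the sum of the other two and ℓ₁ + ℓ₂ + ℓ₃ ≤ 2π. -/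
/-!
Writing `arccos ⟪x, y⟫` as the unoriented angle between unit vectors, the three triangle
inequalities are the triangle inequality for angles, and the perimeter bound is the same inequality
through `-p`, since replacing `p` by `-p` turns the sides `ℓ₂, ℓ₃` into `π - ℓ₂, π - ℓ₃`.
Conversely, put `p` at the pole and `q` on a meridian at distance `ℓ₃`. As `r` runs around the
circle of radius `ℓ₂` about `p`, the spherical law of cosines shows that `⟪q, r⟫` sweeps the interval
`[cos (ℓ₂ + ℓ₃), cos (ℓ₂ - ℓ₃)]`, and the stated inequalities put `cos ℓ₁` in that interval.
-/

open Real InnerProductGeometry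

noncomputable def sphericalPoint (θ φ : ℝ) : EuclideanSpace ℝ (Fin 3) :=
  !₂[cos θ, sin θ * cos φ, sin θ * sin φ]

theorem inner_sphericalPoint (θ φ θ' φ' : ℝ) :
    inner ℝ (sphericalPoint θ φ) (sphericalPoint θ' φ') =
      cos θ * cos θ' + sin θ * sin θ' * cos (φ - φ') := by
  simp only [sphericalPoint, PiLp.inner_apply, RCLike.inner_apply, ringHom_apply,
    Fin.sum_univ_three, Fin.isValue, Matrix.cons_val_zero, Matrix.cons_val_one, Matrix.cons_val,
    cos_sub]
  ring

theorem norm_sphericalPoint (θ φ : ℝ) : ‖sphericalPoint θ φ‖ = 1 := by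
  have h := inner_sphericalPoint θ φ θ φ
  rw [real_inner_self_eq_norm_sq, sub_self, cos_zero, mul_one, ← sq, ← sq, cos_sq_add_sin_sq] at h
  exact (pow_eq_one_iff_of_nonneg (norm_nonneg _) two_ne_zero).1 h

section
variable {V : Type*} [NormedAddCommGroup V] [InnerProductSpace ℝ V]

theorem arccos_inner_eq_angle {x y : V} (hx : ‖x‖ = 1) (hy : ‖y‖ = 1) :
    arccos (inner ℝ x y) = angle x y := by
  simp [angle, hx, hy]

theorem angle_add_angle_add_angle_le_two_pi (x y z : V) :
    angle x y + angle y z + angle z x ≤ 2 * π := by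
  have h := angle_le_angle_add_angle y (-x) z
  rw [angle_neg_right, angle_neg_left] at h
  linarith [angle_comm x y, angle_comm x z]
end

theorem cos_le_cos_of_le_of_le_two_pi_sub {x y : ℝ} (hx : 0 ≤ x) (hxy : x ≤ y)
    (hy : y ≤ 2 * π - x) : cos y ≤ cos x := by
  rcases le_total y π with hyπ | hπy
  · exact cos_le_cos_of_nonneg_of_le_pi hx hyπ hxy
  · rw [← cos_two_pi_sub y]
    exact cos_le_cos_of_nonneg_of_le_pi hx (by linarith) (by linarith)

theorem cos_mem_Icc_cos_add_cos_sub {a b c : ℝ} (ha : a ∈ Set.Icc 0 π) (hab : a ≤ b + c)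
    (hba : b ≤ c + a) (hca : c ≤ a + b) (hsum : a + b + c ≤ 2 * π) :
    cos a ∈ Set.Icc (cos (b + c)) (cos (b - c)) := by
  refine ⟨cos_le_cos_of_le_of_le_two_pi_sub ha.1 hab (by linarith), ?_⟩
  rw [← cos_abs (b - c)]
  exact cos_le_cos_of_nonneg_of_le_pi (abs_nonneg _) ha.2 (abs_le.2 ⟨by linarith, by linarith⟩)

theorem exists_cos_mul_cos_add_sin_mul_sin_mul_cos_eq {a b x : ℝ}
    (hx : x ∈ Set.Icc (cos (a + b)) (cos (a - b))) :
    ∃ θ, cos a * cos b + sin a * sin b * cos θ = x := by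
  have hcont : Continuous fun θ => cos a * cos b + sin a * sin b * cos θ := by fun_prop
  refine intermediate_value_univ π 0 hcont ?_
  simpa only [cos_pi, cos_zero, mul_neg_one, mul_one, ← sub_eq_add_neg, ← cos_add, ← cos_sub]
    using hx

/-- a spherical triangle on the unit sphere `S² ⊆ ℝ³` with side lengths
`ℓ₁, ℓ₂, ℓ₃ ∈ [0, π]` (geodesic distances `arccos⟨·,·⟩`) exists if and only if each side
is at most the sum of the other two and `ℓ₁ + ℓ₂ + ℓ₃ ≤ 2π`. -/
theorem spherical_triangle_iff (l1 l2 l3 : ℝ)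
    (h1 : l1 ∈ Set.Icc 0 π) (h2 : l2 ∈ Set.Icc 0 π) (h3 : l3 ∈ Set.Icc 0 π) :
    (∃ p q r : EuclideanSpace ℝ (Fin 3), ‖p‖ = 1 ∧ ‖q‖ = 1 ∧ ‖r‖ = 1 ∧
        Real.arccos (inner ℝ q r) = l1 ∧ Real.arccos (inner ℝ r p) = l2 ∧
        Real.arccos (inner ℝ p q) = l3) ↔
      (l1 ≤ l2 + l3 ∧ l2 ≤ l3 + l1 ∧ l3 ≤ l1 + l2 ∧ l1 + l2 + l3 ≤ 2 * π) := by
  constructor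
  · rintro ⟨p, q, r, hp, hq, hr, rfl, rfl, rfl⟩
    rw [arccos_inner_eq_angle hq hr, arccos_inner_eq_angle hr hp, arccos_inner_eq_angle hp hq]
    have hqr := angle_le_angle_add_angle q p r
    have hrp := angle_le_angle_add_angle r q p
    have hpq := angle_le_angle_add_angle p r q
    refine ⟨?_, ?_, ?_, angle_add_angle_add_angle_le_two_pi q r p⟩ <;>
      linarith [angle_comm p q, angle_comm q r, angle_comm r p]
  · rintro ⟨h123, h231, h312, hsum⟩
    obtain ⟨θ, hθ⟩ := exists_cos_mul_cos_add_sin_mul_sin_mul_cos_eq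
      (cos_mem_Icc_cos_add_cos_sub h1 h123 h231 h312 hsum)
    refine ⟨sphericalPoint 0 0, sphericalPoint l3 0, sphericalPoint l2 θ, norm_sphericalPoint _ _,
      norm_sphericalPoint _ _, norm_sphericalPoint _ _, ?_, ?_, ?_⟩
    · rw [inner_sphericalPoint, zero_sub, cos_neg, mul_comm (cos l3), mul_comm (sin l3), hθ,
        arccos_cos h1.1 h1.2]
    · rw [inner_sphericalPoint, cos_zero, sin_zero]
      simpa using arccos_cos h2.1 h2.2
    · rw [inner_sphericalPoint, cos_zero, sin_zero]
      simpa using arccos_cos h3.1 h3.2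
end

section
/- Given six positive real numbers a, b, c, d, e, f arranged as edge lengths of a combinatorial tetrahedron (a, b, f one face; a, c, e another; b, c, d another; d, e, f the fourth), if each of the four triples satisfies the strict triangle inequality and the Cayley–Menger determinant of the squared lengths is positive, then there exists a nondegenerate tetrahedron in Euclidean ℝ³ whose edge lengths are a, b, c, d, e, f in this combinatorial pattern. -/
/-- The Cayley–Menger determinant of six (squared) edge lengths in the combinatorial
pattern `a = |P₀P₁|`, `b = |P₀P₂|`, `c = |P₀P₃|`, `d = |P₂P₃|`, `e = |P₁P₃|`,
`f = |P₁P₂|`: the determinant of the 5×5 matrix with rows/columns indexed by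
`{∗, 0, 1, 2, 3}`, with `(∗,∗)` entry `0`, entries `(∗,i) = (i,∗) = 1`, and `(i,j)` entry
the squared distance `|PᵢPⱼ|²`. -/
noncomputable def cayleyMenger (a b c d e f : ℝ) : ℝ :=
  Matrix.det !![0, 1,     1,     1,     1;
                1, 0,     a ^ 2, b ^ 2, c ^ 2;
                1, a ^ 2, 0,     f ^ 2, e ^ 2;
                1, b ^ 2, f ^ 2, 0,     d ^ 2;
                1, c ^ 2, e ^ 2, d ^ 2, 0]

/-!
Put `P₀` at the origin, `P₁ = (a, 0, 0)` and, using the triangle inequalities of the face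
`a, b, f` (Heron's formula), `P₂ = (x₂, y₂, 0)` with `y₂ > 0`. The remaining conditions
`|P₀P₃| = c`, `|P₁P₃| = e`, `|P₂P₃| = d` are linear in the first two coordinates of `P₃` once
the squared height `w = z₃²` is kept as an unknown, and in these coordinates the Cayley–Menger
determinant equals `8 (a y₂)² w`. Hence its positivity is exactly `w > 0`, so `z₃ = √w` is real
and nonzero.
-/

theorem cayleyMenger_eq_of_coords {a b c d e f x₂ y₂ x₃ y₃ w : ℝ}
    (hb : b ^ 2 = x₂ ^ 2 + y₂ ^ 2) (hf : f ^ 2 = (a - x₂) ^ 2 + y₂ ^ 2)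
    (hc : c ^ 2 = x₃ ^ 2 + y₃ ^ 2 + w) (he : e ^ 2 = (a - x₃) ^ 2 + y₃ ^ 2 + w)
    (hd : d ^ 2 = (x₂ - x₃) ^ 2 + (y₂ - y₃) ^ 2 + w) :
    cayleyMenger a b c d e f = 8 * (a * y₂) ^ 2 * w := by
  simp [cayleyMenger, Matrix.det_succ_row_zero, Fin.sum_univ_succ, Fin.succAbove,
    hb, hc, hd, he, hf]
  ring

theorem exists_coords_of_triangle {a b f : ℝ} (ha : 0 < a)
    (habf : a < b + f ∧ b < f + a ∧ f < a + b) :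
    ∃ x y : ℝ, 0 < y ∧ b ^ 2 = x ^ 2 + y ^ 2 ∧ f ^ 2 = (a - x) ^ 2 + y ^ 2 := by
  obtain ⟨h₁, h₂, h₃⟩ := habf
  obtain ⟨x, hx⟩ : ∃ x, 2 * a * x = a ^ 2 + b ^ 2 - f ^ 2 :=
    ⟨_, mul_div_cancel₀ _ (by positivity)⟩
  -- Heron's formula for the squared height `b² - x²` over the side `a`
  have heron : (2 * a) ^ 2 * (b ^ 2 - x ^ 2) =
      (a + b + f) * (a + b - f) * (a - b + f) * (-a + b + f) := by
    linear_combination (-(a ^ 2 + b ^ 2 - f ^ 2) - 2 * a * x) * hx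
  have hy : 0 < b ^ 2 - x ^ 2 := by
    refine pos_of_mul_pos_right (heron ▸ ?_) (sq_nonneg (2 * a))
    apply mul_pos (mul_pos (mul_pos _ _) _) _ <;> linarith
  refine ⟨x, √(b ^ 2 - x ^ 2), Real.sqrt_pos.2 hy, ?_, ?_⟩
  · rw [Real.sq_sqrt hy.le]; ring
  · rw [Real.sq_sqrt hy.le]; linear_combination hx

theorem exists_apex_coords {a x₂ y₂ : ℝ} (ha : a ≠ 0) (hy₂ : y₂ ≠ 0) (c d e : ℝ) :
    ∃ x₃ y₃ w : ℝ, c ^ 2 = x₃ ^ 2 + y₃ ^ 2 + w ∧ e ^ 2 = (a - x₃) ^ 2 + y₃ ^ 2 + w ∧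
      d ^ 2 = (x₂ - x₃) ^ 2 + (y₂ - y₃) ^ 2 + w := by
  obtain ⟨x₃, hx⟩ : ∃ x₃, 2 * a * x₃ = a ^ 2 + c ^ 2 - e ^ 2 :=
    ⟨_, mul_div_cancel₀ _ (mul_ne_zero two_ne_zero ha)⟩
  obtain ⟨y₃, hy⟩ : ∃ y₃, 2 * y₂ * y₃ = x₂ ^ 2 + y₂ ^ 2 + c ^ 2 - d ^ 2 - 2 * x₂ * x₃ :=
    ⟨_, mul_div_cancel₀ _ (mul_ne_zero two_ne_zero hy₂)⟩
  exact ⟨x₃, y₃, c ^ 2 - x₃ ^ 2 - y₃ ^ 2, by ring, by linear_combination hx,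
    by linear_combination hy⟩

theorem affineIndependent_of_triangular_coords {a x₂ y₂ x₃ y₃ z₃ : ℝ}
    (ha : a ≠ 0) (hy₂ : y₂ ≠ 0) (hz₃ : z₃ ≠ 0) :
    AffineIndependent ℝ ![!₂[0, 0, 0], !₂[a, 0, 0], !₂[x₂, y₂, 0], !₂[x₃, y₃, z₃]] := by
  rw [affineIndependent_iff_of_fintype]
  intro w hw hp
  rw [Finset.weightedVSub_eq_linear_combination _ hw] at hp
  rw [Fin.sum_univ_four] at hw hp
  have h₀ := congrArg (· 0) hp
  have h₁ := congrArg (· 1) hp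
  have h₂ := congrArg (· 2) hp
  simp only [Matrix.cons_val_zero, Matrix.cons_val_one, Matrix.cons_val, PiLp.add_apply,
    PiLp.smul_apply, PiLp.zero_apply, smul_eq_mul, mul_zero, zero_add, add_zero,
    mul_eq_zero] at h₀ h₁ h₂
  have w₃ : w 3 = 0 := h₂.resolve_right hz₃
  have w₂ : w 2 = 0 := by simpa [w₃, hy₂] using h₁
  have w₁ : w 1 = 0 := by simpa [w₂, w₃, ha] using h₀
  have w₀ : w 0 = 0 := by simpa [w₁, w₂, w₃] using hw
  intro i
  fin_cases i <;> assumption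

theorem EuclideanSpace.dist_eq_of_sq_coords {x y : EuclideanSpace ℝ (Fin 3)} {r : ℝ}
    (hr : 0 ≤ r) (h : (x 0 - y 0) ^ 2 + (x 1 - y 1) ^ 2 + (x 2 - y 2) ^ 2 = r ^ 2) :
    dist x y = r := by
  rw [EuclideanSpace.dist_eq, Fin.sum_univ_three]
  simp only [Real.dist_eq, sq_abs]
  rw [h, Real.sqrt_sq hr]

theorem exists_tetrahedron_of_cayleyMenger_pos_general (a b c d e f : ℝ)
    (hpos : 0 < a ∧ 0 < b ∧ 0 < c ∧ 0 < d ∧ 0 < e ∧ 0 < f)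
    (habf : a < b + f ∧ b < f + a ∧ f < a + b)
    (hcm : 0 < cayleyMenger a b c d e f) :
    ∃ P : Fin 4 → EuclideanSpace ℝ (Fin 3), AffineIndependent ℝ P ∧
      dist (P 0) (P 1) = a ∧ dist (P 0) (P 2) = b ∧ dist (P 0) (P 3) = c ∧
      dist (P 2) (P 3) = d ∧ dist (P 1) (P 3) = e ∧ dist (P 1) (P 2) = f := by
  obtain ⟨ha, hb, hc, hd, he, hf⟩ := hpos
  obtain ⟨x₂, y₂, hy₂, hb₂, hf₂⟩ := exists_coords_of_triangle ha habf
  obtain ⟨x₃, y₃, w, hc₃, he₃, hd₃⟩ := exists_apex_coords ha.ne' hy₂.ne' c d e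
  have hw : 0 < w := by
    rw [cayleyMenger_eq_of_coords hb₂ hf₂ hc₃ he₃ hd₃] at hcm
    exact pos_of_mul_pos_right hcm (by positivity)
  refine ⟨![!₂[0, 0, 0], !₂[a, 0, 0], !₂[x₂, y₂, 0], !₂[x₃, y₃, √w]],
    affineIndependent_of_triangular_coords ha.ne' hy₂.ne' (Real.sqrt_pos.2 hw).ne',
    ?_, ?_, ?_, ?_, ?_, ?_⟩ <;> apply EuclideanSpace.dist_eq_of_sq_coords (by positivity) <;>
    simp [Real.sq_sqrt hw.le] <;> linarith

/-- if the four face triples of `(a,b,c,d,e,f)` satisfy the strict triangle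
inequality and the Cayley–Menger determinant is positive, then a nondegenerate tetrahedron
in `ℝ³` with these edge lengths exists. -/
theorem exists_tetrahedron_of_cayleyMenger_pos (a b c d e f : ℝ)
    (hpos : 0 < a ∧ 0 < b ∧ 0 < c ∧ 0 < d ∧ 0 < e ∧ 0 < f)
    (habf : a < b + f ∧ b < f + a ∧ f < a + b)
    (hace : a < c + e ∧ c < e + a ∧ e < a + c)
    (hbcd : b < c + d ∧ c < d + b ∧ d < b + c)
    (hdef : d < e + f ∧ e < f + d ∧ f < d + e)
    (hcm : 0 < cayleyMenger a b c d e f) :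
    ∃ P : Fin 4 → EuclideanSpace ℝ (Fin 3), AffineIndependent ℝ P ∧
      dist (P 0) (P 1) = a ∧ dist (P 0) (P 2) = b ∧ dist (P 0) (P 3) = c ∧
      dist (P 2) (P 3) = d ∧ dist (P 1) (P 3) = e ∧ dist (P 1) (P 2) = f :=
  exists_tetrahedron_of_cayleyMenger_pos_general a b c d e f hpos habf hcm
end

section
/- Conversely, given nonnegative reals a, b, c, d, e such that (a,b,e) and (e,c,d) both satisfy the real triangle inequality, there exists a quadruple (u,v,w,x) of vectors in ℝ³ with |u|=a, |v|=b, |w|=c, |x|=d, u+v+w+x=0, and |u+v| = e. -/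
/-!
On a sphere of radius `x` through the points `± x • v`, where `v` is the unit vector along `p`,
the distance to `p` runs continuously from `|‖p‖ - x|` to `‖p‖ + x`. In dimension at least two the
sphere is connected, so every value in between is attained: a triangle with sides `x`, `y`, `‖p‖`
can be erected on the segment `[0, p]`. Erecting the triangles `(a, b, e)` and `(c, d, e)` on the
same diagonal `p` of length `e` closes up the quadrilateral.
-/

open Metric

def RealTriangle (x y z : ℝ) : Prop := x ≤ y + z ∧ y ≤ z + x ∧ z ≤ x + y

section NormedSpace

variable {E : Type*} [NormedAddCommGroup E] [NormedSpace ℝ E]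

theorem exists_norm_eq_one_and_eq_norm_smul [Nontrivial E] (p : E) :
    ∃ v : E, ‖v‖ = 1 ∧ p = ‖p‖ • v := by
  rcases eq_or_ne p 0 with rfl | hp
  · obtain ⟨v, hv⟩ := exists_norm_eq E zero_le_one
    exact ⟨v, hv, by simp⟩
  · exact ⟨‖p‖⁻¹ • p, by simp [norm_smul, hp], by simp [smul_smul, hp]⟩

theorem exists_norm_eq_and_norm_sub_eq (hE : 1 < Module.rank ℝ E) (p : E) {x y : ℝ}
    (hlo : |‖p‖ - x| ≤ y) (hhi : y ≤ ‖p‖ + x) : ∃ u : E, ‖u‖ = x ∧ ‖p - u‖ = y := by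
  have : Nontrivial E := rank_pos_iff_nontrivial.1 (zero_lt_one.trans hE)
  have hx : 0 ≤ x := by linarith [le_abs_self (‖p‖ - x)]
  obtain ⟨v, hv, hpv⟩ := exists_norm_eq_one_and_eq_norm_smul p
  have hdist (t : ℝ) : ‖p - t • v‖ = |‖p‖ - t| := by
    rw [hpv, ← sub_smul, norm_smul, hv, mul_one, Real.norm_eq_abs, norm_smul, hv, mul_one, norm_norm]
  have hmem (t : ℝ) : t • v ∈ sphere (0 : E) |t| := by simp [norm_smul, hv]
  obtain ⟨u, hu, hpu⟩ := (isPreconnected_sphere hE 0 x).intermediate_value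
    (a := x • v) (b := (-x) • v) (f := fun u ↦ ‖p - u‖)
    (by simpa only [abs_of_nonneg hx] using hmem x)
    (by simpa only [abs_neg, abs_of_nonneg hx] using hmem (-x)) (by fun_prop)
    (show y ∈ _ by
      rw [hdist, hdist, sub_neg_eq_add, abs_of_nonneg (show 0 ≤ ‖p‖ + x by positivity)]
      exact ⟨hlo, hhi⟩)
  exact ⟨u, mem_sphere_zero_iff_norm.1 hu, hpu⟩

end NormedSpace

theorem quadrilateral_diagonal_attained_general (a b c d e : ℝ)
    (he : 0 ≤ e)
    (h1 : RealTriangle a b e) (h2 : RealTriangle e c d) :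
    ∃ u v w x : EuclideanSpace ℝ (Fin 3),
      ‖u‖ = a ∧ ‖v‖ = b ∧ ‖w‖ = c ∧ ‖x‖ = d ∧ u + v + w + x = 0 ∧ ‖u + v‖ = e := by
  have hE : 1 < Module.rank ℝ (EuclideanSpace ℝ (Fin 3)) :=
    Module.one_lt_rank_of_one_lt_finrank (by simp)
  obtain ⟨p, rfl⟩ := exists_norm_eq (EuclideanSpace ℝ (Fin 3)) he
  obtain ⟨h1a, h1b, h1e⟩ := h1
  obtain ⟨h2e, h2c, h2d⟩ := h2
  obtain ⟨u, hu, hpu⟩ := exists_norm_eq_and_norm_sub_eq hE p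
    (abs_sub_le_iff.2 ⟨by linarith, by linarith⟩) h1b
  obtain ⟨w, hw, hpw⟩ := exists_norm_eq_and_norm_sub_eq hE p
    (abs_sub_le_iff.2 ⟨by linarith, by linarith⟩) h2d
  refine ⟨u, p - u, -w, w - p, hu, hpu, by rwa [norm_neg], by rwa [norm_sub_rev], by abel, ?_⟩
  rw [add_sub_cancel]

/-- any admissible diagonal value `e` is attained on the space of closed
quadrilaterals in `ℝ³` with side lengths `a, b, c, d`. -/
theorem quadrilateral_diagonal_attained (a b c d e : ℝ)
    (ha : 0 ≤ a) (hb : 0 ≤ b) (hc : 0 ≤ c) (hd : 0 ≤ d) (he : 0 ≤ e)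
    (h1 : RealTriangle a b e) (h2 : RealTriangle e c d) :
    ∃ u v w x : EuclideanSpace ℝ (Fin 3),
      ‖u‖ = a ∧ ‖v‖ = b ∧ ‖w‖ = c ∧ ‖x‖ = d ∧ u + v + w + x = 0 ∧ ‖u + v‖ = e :=
  quadrilateral_diagonal_attained_general a b c d e he h1 h2
end

section
/- For the unit-sphere conjugacy-class model of SU(2): if A, B ∈ SU(2) have traces 2cos α and 2cos β respectively (α, β ∈ [0, π]), then the trace of AB equals 2cos γ for some γ ∈ [0, π] satisfying |α − β| ≤ γ ≤ min(α + β, 2π − α − β). -/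
open Real

/-!
An element of `SU(2)` has the form `[[a, b], [-b̄, ā]]` with `|a|² + |b|² = 1`, i.e. it is a unit
quaternion `(x₀, x⃗) ∈ ℝ⁴` with `x₀ = Re a`, and its trace is `2 x₀`. The `(0,0)` entry of a product
has real part `x₀ y₀ - ⟨x⃗, y⃗⟩`, and `‖x⃗‖ = sin α`, `‖y⃗‖ = sin β`, so by Cauchy–Schwarz
`tr(AB) / 2 ∈ [cos (α + β), cos (α - β)]`. Then `γ = arccos (tr(AB) / 2)` works.
-/

open Matrix ComplexConjugate

namespace Real

lemma le_arccos_of_le_cos {θ t : ℝ} (hθ : θ ∈ Set.Icc 0 π) (h : t ≤ cos θ) : θ ≤ arccos t :=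
  calc θ = arccos (cos θ) := (arccos_cos hθ.1 hθ.2).symm
    _ ≤ arccos t := arccos_le_arccos h

lemma arccos_le_of_cos_le {θ t : ℝ} (hθ : 0 ≤ θ) (h : cos θ ≤ t) : arccos t ≤ θ := by
  rcases le_total θ π with hθπ | hπθ
  · calc arccos t ≤ arccos (cos θ) := arccos_le_arccos h
      _ = θ := arccos_cos hθ hθπ
  · exact (arccos_le_pi t).trans hπθ

lemma cos_mul_cos_sub_mem_Icc {α β s : ℝ} (hα : α ∈ Set.Icc 0 π) (hβ : β ∈ Set.Icc 0 π)
    (hs : s ^ 2 ≤ (1 - cos α ^ 2) * (1 - cos β ^ 2)) :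
    cos α * cos β - s ∈ Set.Icc (cos (α + β)) (cos (α - β)) := by
  have hsin : 0 ≤ sin α * sin β :=
    mul_nonneg (sin_nonneg_of_mem_Icc hα) (sin_nonneg_of_mem_Icc hβ)
  have habs : |s| ≤ sin α * sin β := by
    refine abs_le_of_sq_le_sq' ?_ hsin |> abs_le.2
    rw [mul_pow, sin_sq, sin_sq]
    exact hs
  rw [cos_add, cos_sub]
  constructor <;> linarith [abs_le.1 habs]

end Real

lemma Complex.sq_im_mul_im_add_re_mul_conj_le (a b p q : ℂ) :
    (a.im * p.im + (b * conj q).re) ^ 2 ≤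
      (normSq a + normSq b - a.re ^ 2) * (normSq p + normSq q - p.re ^ 2) := by
  simp only [Complex.normSq_apply, Complex.mul_re, Complex.conj_re, Complex.conj_im]
  nlinarith [sq_nonneg (a.im * q.re - b.re * p.im), sq_nonneg (a.im * q.im - b.im * p.im),
    sq_nonneg (b.re * q.im - b.im * q.re)]

namespace Matrix

lemma star_eq_adjugate_of_mem_specialUnitaryGroup_s18 {n R : Type*} [Fintype n] [DecidableEq n]
    [CommRing R] [StarRing R] {M : Matrix n n R} (hM : M ∈ specialUnitaryGroup n R) :
    star M = adjugate M := by
  obtain ⟨hunit, hdet⟩ := mem_specialUnitaryGroup_iff.1 hM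
  calc star M = star M * (M * adjugate M) := by rw [mul_adjugate, hdet, one_smul, mul_one]
    _ = adjugate M := by rw [← mul_assoc, hunit.1, one_mul]

lemma apply_eq_of_mem_specialUnitaryGroup_fin_two {R : Type*} [CommRing R] [StarRing R]
    {M : Matrix (Fin 2) (Fin 2) R} (hM : M ∈ specialUnitaryGroup (Fin 2) R) :
    M 1 1 = star (M 0 0) ∧ M 1 0 = -star (M 0 1) := by
  have h := star_eq_adjugate_of_mem_specialUnitaryGroup_s18 hM
  have h00 := congrFun (congrFun h 0) 0
  have h01 := congrFun (congrFun h 0) 1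
  simp only [star_apply, adjugate_fin_two, of_apply, cons_val', cons_val_zero,
    cons_val_one] at h00 h01
  refine ⟨h00.symm, ?_⟩
  rw [← star_star (M 1 0), h01, star_neg]

lemma mul_star_add_mul_star_of_mem_specialUnitaryGroup_fin_two {R : Type*} [CommRing R]
    [StarRing R] {M : Matrix (Fin 2) (Fin 2) R} (hM : M ∈ specialUnitaryGroup (Fin 2) R) :
    M 0 0 * star (M 0 0) + M 0 1 * star (M 0 1) = 1 := by
  have h := congrFun (congrFun (mem_unitaryGroup_iff.1 (mem_specialUnitaryGroup_iff.1 hM).1) 0) 0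
  simpa [mul_apply, Fin.sum_univ_two] using h

variable {M N : Matrix (Fin 2) (Fin 2) ℂ}

lemma trace_eq_two_mul_re_of_mem_specialUnitaryGroup_fin_two
    (hM : M ∈ specialUnitaryGroup (Fin 2) ℂ) : trace M = ((2 * (M 0 0).re : ℝ) : ℂ) := by
  rw [trace_fin_two, (apply_eq_of_mem_specialUnitaryGroup_fin_two hM).1]
  exact Complex.add_conj _

lemma normSq_add_normSq_of_mem_specialUnitaryGroup_fin_two
    (hM : M ∈ specialUnitaryGroup (Fin 2) ℂ) :
    Complex.normSq (M 0 0) + Complex.normSq (M 0 1) = 1 := by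
  have h := mul_star_add_mul_star_of_mem_specialUnitaryGroup_fin_two hM
  simp only [Complex.star_def, Complex.mul_conj] at h
  exact_mod_cast h

lemma re_mul_apply_zero_zero_mem_Icc (hM : M ∈ specialUnitaryGroup (Fin 2) ℂ)
    (hN : N ∈ specialUnitaryGroup (Fin 2) ℂ) {α β : ℝ} (hα : α ∈ Set.Icc 0 π)
    (hβ : β ∈ Set.Icc 0 π) (hMα : (M 0 0).re = cos α) (hNβ : (N 0 0).re = cos β) :
    ((M * N) 0 0).re ∈ Set.Icc (cos (α + β)) (cos (α - β)) := by
  have hprod : ((M * N) 0 0).re =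
      (M 0 0).re * (N 0 0).re - ((M 0 0).im * (N 0 0).im + (M 0 1 * conj (N 0 1)).re) := by
    rw [mul_apply, Fin.sum_univ_two, (apply_eq_of_mem_specialUnitaryGroup_fin_two hN).2]
    simp only [Complex.add_re, Complex.mul_re, Complex.neg_re, Complex.neg_im, Complex.star_def]
    ring
  rw [hprod, hMα, hNβ]
  refine Real.cos_mul_cos_sub_mem_Icc hα hβ ?_
  have h := Complex.sq_im_mul_im_add_re_mul_conj_le (M 0 0) (M 0 1) (N 0 0) (N 0 1)
  rwa [normSq_add_normSq_of_mem_specialUnitaryGroup_fin_two hM,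
    normSq_add_normSq_of_mem_specialUnitaryGroup_fin_two hN, hMα, hNβ] at h

end Matrix

/-- if `A, B ∈ SU(2)` have traces `2cos α`, `2cos β` with `α, β ∈ [0, π]`,
then `trace(AB) = 2cos γ` for some `γ ∈ [0, π]` with `|α − β| ≤ γ ≤ min(α+β, 2π−α−β)`. -/
theorem su2_trace_of_product (A B : SU2) (α β : ℝ)
    (hα : α ∈ Set.Icc 0 π) (hβ : β ∈ Set.Icc 0 π)
    (hA : Matrix.trace (A : Matrix (Fin 2) (Fin 2) ℂ) = ((2 * Real.cos α : ℝ) : ℂ))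
    (hB : Matrix.trace (B : Matrix (Fin 2) (Fin 2) ℂ) = ((2 * Real.cos β : ℝ) : ℂ)) :
    ∃ γ : ℝ, γ ∈ Set.Icc 0 π ∧
      Matrix.trace ((A * B : SU2) : Matrix (Fin 2) (Fin 2) ℂ) = ((2 * Real.cos γ : ℝ) : ℂ) ∧
      |α - β| ≤ γ ∧ γ ≤ min (α + β) (2 * π - α - β) := by
  have re_eq_cos {M : SU2} {θ : ℝ}
      (h : trace (M : Matrix (Fin 2) (Fin 2) ℂ) = ((2 * cos θ : ℝ) : ℂ)) :
      ((M : Matrix (Fin 2) (Fin 2) ℂ) 0 0).re = cos θ := by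
    rw [trace_eq_two_mul_re_of_mem_specialUnitaryGroup_fin_two M.2] at h
    linarith [Complex.ofReal_injective h]
  obtain ⟨hlo, hhi⟩ := re_mul_apply_zero_zero_mem_Icc A.2 B.2 hα hβ (re_eq_cos hA) (re_eq_cos hB)
  set t := (((A : Matrix (Fin 2) (Fin 2) ℂ) * B) 0 0).re
  have htrace : trace ((A * B : SU2) : Matrix (Fin 2) (Fin 2) ℂ) = ((2 * t : ℝ) : ℂ) :=
    trace_eq_two_mul_re_of_mem_specialUnitaryGroup_fin_two (A * B).2
  refine ⟨arccos t, ⟨arccos_nonneg t, arccos_le_pi t⟩, ?_, ?_, le_min ?_ ?_⟩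
  · rw [htrace, cos_arccos ((neg_one_le_cos _).trans hlo) (hhi.trans (cos_le_one _))]
  · refine le_arccos_of_le_cos ⟨abs_nonneg _, abs_le.2 ⟨?_, ?_⟩⟩ (by rwa [cos_abs]) <;>
      linarith [hα.1, hα.2, hβ.1, hβ.2]
  · exact arccos_le_of_cos_le (by linarith [hα.1, hβ.1]) hlo
  · refine arccos_le_of_cos_le (by linarith [hα.2, hβ.2]) ?_
    rwa [sub_sub, cos_two_pi_sub]
end
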